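/- arXiv:2408.14733 — 3 statements merged into one kernel-verified Lean document; each statement's English description precedes it below -/
import Mathlib

section
/- Let ω = Σ_{1≤i<j≤6} w_{ij} e^i∧e^j be a 2-form on 𝔤₂ which is non-degenerate (the associated skew-symmetric bilinear form has trivial kernel) and satisfies ω∧dω = 0. Then w₄₅ = w₄₆ = w₅₆ = 0, i.e. ω(e₄,e₅) = ω(e₄,e₆) = ω(e₅,e₆) = 0. -/
open Finset

noncomputable section

/-- The underlying vector space `ℝ⁶`. -/
abbrev V : Type := Fin 6 → ℝ

/-- The `i`-th standard basis vector `eᵢ` (0-indexed: `e 0 = e₁`, …, `e 5 = e₆`). -/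
def e (i : Fin 6) : V := Pi.single i 1

/-- The Lie bracket of the nilpotent Lie algebra 𝔤₂, with nonzero brackets
`[e₁,e₂]=e₃`, `[e₁,e₃]=e₄`, `[e₂,e₃]=e₅` (0-indexed below). -/
def bra (X Y : V) : V :=
  (X 0 * Y 1 - X 1 * Y 0) • e 2 + (X 0 * Y 2 - X 2 * Y 0) • e 3 +
    (X 1 * Y 2 - X 2 * Y 1) • e 4

/-- The Chevalley–Eilenberg differential of a 2-form:
`dω(X,Y,Z) = −ω([X,Y],Z) + ω([X,Z],Y) − ω([Y,Z],X)`. -/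
def dOm (ω : V → V → ℝ) (X Y Z : V) : ℝ :=
  -ω (bra X Y) Z + ω (bra X Z) Y - ω (bra Y Z) X

/-- The wedge product of a 2-form and a 3-form, as a 5-form:
`(ω∧τ)(X₁,…,X₅) = (1/(2!·3!)) Σ_{σ∈S₅} sgn(σ) ω(X_{σ1},X_{σ2}) τ(X_{σ3},X_{σ4},X_{σ5})`. -/
def wedge23 (ω : V → V → ℝ) (τ : V → V → V → ℝ) (Xs : Fin 5 → V) : ℝ :=
  (1 / 12 : ℝ) * ∑ σ : Equiv.Perm (Fin 5),
    ((Equiv.Perm.sign σ : ℤ) : ℝ) *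
      (ω (Xs (σ 0)) (Xs (σ 1)) * τ (Xs (σ 2)) (Xs (σ 3)) (Xs (σ 4)))

/-- The 2-form `ω = Σ_{i<j} w_{ij} e^i ∧ e^j` determined by the coefficients `w i j`
(only the entries with `i < j` are used). -/
def form2 (w : Fin 6 → Fin 6 → ℝ) (X Y : V) : ℝ :=
  ∑ i : Fin 6, ∑ j : Fin 6, if i < j then w i j * (X i * Y j - X j * Y i) else 0

section Aux
open Equiv Equiv.Perm

private lemma a51 (p : Fin 5) (e : Perm (Fin 4)) : decomposeFin.symm (p, e) 1 = swap 0 p ((e 0).succ) := decomposeFin_symm_apply_succ e p 0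
private lemma a52 (p : Fin 5) (e : Perm (Fin 4)) : decomposeFin.symm (p, e) 2 = swap 0 p ((e 1).succ) := decomposeFin_symm_apply_succ e p 1
private lemma a53 (p : Fin 5) (e : Perm (Fin 4)) : decomposeFin.symm (p, e) 3 = swap 0 p ((e 2).succ) := decomposeFin_symm_apply_succ e p 2
private lemma a54 (p : Fin 5) (e : Perm (Fin 4)) : decomposeFin.symm (p, e) 4 = swap 0 p ((e 3).succ) := decomposeFin_symm_apply_succ e p 3
private lemma a41 (p : Fin 4) (e : Perm (Fin 3)) : decomposeFin.symm (p, e) 1 = swap 0 p ((e 0).succ) := decomposeFin_symm_apply_succ e p 0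
private lemma a42 (p : Fin 4) (e : Perm (Fin 3)) : decomposeFin.symm (p, e) 2 = swap 0 p ((e 1).succ) := decomposeFin_symm_apply_succ e p 1
private lemma a43 (p : Fin 4) (e : Perm (Fin 3)) : decomposeFin.symm (p, e) 3 = swap 0 p ((e 2).succ) := decomposeFin_symm_apply_succ e p 2
private lemma a31 (p : Fin 3) (e : Perm (Fin 2)) : decomposeFin.symm (p, e) 1 = swap 0 p ((e 0).succ) := decomposeFin_symm_apply_succ e p 0
private lemma a32 (p : Fin 3) (e : Perm (Fin 2)) : decomposeFin.symm (p, e) 2 = swap 0 p ((e 1).succ) := decomposeFin_symm_apply_succ e p 1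
private lemma a21 (p : Fin 2) (e : Perm (Fin 1)) : decomposeFin.symm (p, e) 1 = swap 0 p ((e 0).succ) := decomposeFin_symm_apply_succ e p 0
private lemma p1 (e : Perm (Fin 1)) (x : Fin 1) : e x = 0 := Subsingleton.elim _ _
private lemma s10 : (0 : Fin 1).succ = 1 := rfl
private lemma s20 : (0 : Fin 2).succ = 1 := rfl
private lemma s21 : (1 : Fin 2).succ = 2 := rfl
private lemma s30 : (0 : Fin 3).succ = 1 := rfl
private lemma s31 : (1 : Fin 3).succ = 2 := rfl
private lemma s32 : (2 : Fin 3).succ = 3 := rfl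
private lemma s40 : (0 : Fin 4).succ = 1 := rfl
private lemma s41 : (1 : Fin 4).succ = 2 := rfl
private lemma s42 : (2 : Fin 4).succ = 3 := rfl
private lemma s43 : (3 : Fin 4).succ = 4 := rfl

set_option maxHeartbeats 4000000 in
private lemma perm5_expand (f : Fin 5 → Fin 5 → Fin 5 → Fin 5 → Fin 5 → ℝ) :
    ∑ σ : Equiv.Perm (Fin 5), ((Equiv.Perm.sign σ : ℤ) : ℝ) * f (σ 0) (σ 1) (σ 2) (σ 3) (σ 4)
    = f 0 1 2 3 4 - f 0 1 2 4 3 - f 0 1 3 2 4 + f 0 1 3 4 2 + f 0 1 4 2 3 - f 0 1 4 3 2 - f 0 2 1 3 4 + f 0 2 1 4 3 + f 0 2 3 1 4 - f 0 2 3 4 1 - f 0 2 4 1 3 + f 0 2 4 3 1 + f 0 3 1 2 4 - f 0 3 1 4 2 - f 0 3 2 1 4 + f 0 3 2 4 1 + f 0 3 4 1 2 - f 0 3 4 2 1 - f 0 4 1 2 3 + f 0 4 1 3 2 + f 0 4 2 1 3 - f 0 4 2 3 1 - f 0 4 3 1 2 + f 0 4 3 2 1 - f 1 0 2 3 4 +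 f 1 0 2 4 3 + f 1 0 3 2 4 - f 1 0 3 4 2 - f 1 0 4 2 3 + f 1 0 4 3 2 + f 1 2 0 3 4 - f 1 2 0 4 3 - f 1 2 3 0 4 + f 1 2 3 4 0 + f 1 2 4 0 3 - f 1 2 4 3 0 - f 1 3 0 2 4 + f 1 3 0 4 2 + f 1 3 2 0 4 - f 1 3 2 4 0 - f 1 3 4 0 2 + f 1 3 4 2 0 + f 1 4 0 2 3 - f 1 4 0 3 2 - f 1 4 2 0 3 + f 1 4 2 3 0 + f 1 4 3 0 2 - f 1 4 3 2 0 + f 2 0 1 3 4 - f 2 0 1 4 3 - f 2 0 3 1 4 + f 2 0 3 4 1 + f 2 0 4 1 3 - f 2 0 4 3 1 - f 2 1 0 3 4 + f 2 1 0 4 3 + f 2 1 3 0 4 - f 2 1 3 4 0 - f 2 1 4 0 3 + f 2 1 4 3 0 + f 2 3 0 1 4 - f 2 3 0 4 1 - f 2 3 1 0 4 + f 2 3 1 4 0 + f 2 3 4 0 1 - f 2 3 4 1 0 - f 2 4 0 1 3 + f 2 4 0 3 1 + f 2 4 1 0 3 - f 2 4 1 3 0 - f 2 4 3 0 1 + f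 2 4 3 1 0 - f 3 0 1 2 4 + f 3 0 1 4 2 + f 3 0 2 1 4 - f 3 0 2 4 1 - f 3 0 4 1 2 + f 3 0 4 2 1 + f 3 1 0 2 4 - f 3 1 0 4 2 - f 3 1 2 0 4 + f 3 1 2 4 0 + f 3 1 4 0 2 - f 3 1 4 2 0 - f 3 2 0 1 4 + f 3 2 0 4 1 + f 3 2 1 0 4 - f 3 2 1 4 0 - f 3 2 4 0 1 + f 3 2 4 1 0 + f 3 4 0 1 2 - f 3 4 0 2 1 - f 3 4 1 0 2 + f 3 4 1 2 0 + f 3 4 2 0 1 - f 3 4 2 1 0 + f 4 0 1 2 3 - f 4 0 1 3 2 - f 4 0 2 1 3 + f 4 0 2 3 1 + f 4 0 3 1 2 - f 4 0 3 2 1 - f 4 1 0 2 3 + f 4 1 0 3 2 + f 4 1 2 0 3 - f 4 1 2 3 0 - f 4 1 3 0 2 + f 4 1 3 2 0 + f 4 2 0 1 3 - f 4 2 0 3 1 - f 4 2 1 0 3 + f 4 2 1 3 0 + f 4 2 3 0 1 - f 4 2 3 1 0 - f 4 3 0 1 2 + f 4 3 0 2 1 + f 4 3 1 0 2 - f 4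 3 1 2 0 - f 4 3 2 0 1 + f 4 3 2 1 0 := by
  simp only [Finset.univ_perm_fin_succ, Finset.sum_map, Fintype.sum_prod_type,
    Equiv.coe_toEmbedding]
  simp (config := { decide := true }) only [Fin.sum_univ_succ, Finset.univ_unique,
    Finset.sum_singleton, Equiv.Perm.decomposeFin.symm_sign,
    decomposeFin_symm_apply_zero, a51,a52,a53,a54,a41,a42,a43,a31,a32,a21,p1,
    s10,s20,s21,s30,s31,s32,s40,s41,s42,s43, swap_apply_def, if_true, if_false,
    Finset.univ_eq_empty, Finset.sum_empty]
  norm_num [s10,s20,s21,s30,s31,s32,s40,s41,s42,s43]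
  ring

set_option maxHeartbeats 1000000 in
private lemma wedge23_expand (ω : V → V → ℝ) (τ : V → V → V → ℝ) (Xs : Fin 5 → V) :
    wedge23 ω τ Xs = (1 / 12 : ℝ) * (ω (Xs 0) (Xs 1) * τ (Xs 2) (Xs 3) (Xs 4) - ω (Xs 0) (Xs 1) * τ (Xs 2) (Xs 4) (Xs 3) - ω (Xs 0) (Xs 1) * τ (Xs 3) (Xs 2) (Xs 4) + ω (Xs 0) (Xs 1) * τ (Xs 3) (Xs 4) (Xs 2) + ω (Xs 0) (Xs 1) * τ (Xs 4) (Xs 2) (Xs 3) - ω (Xs 0) (Xs 1) * τ (Xs 4) (Xs 3) (Xs 2) - ω (Xs 0) (Xs 2) * τ (Xs 1) (Xs 3) (Xs 4) + ω (Xs 0) (Xs 2) * τ (Xs 1) (Xs 4) (Xs 3) + ω (Xs 0) (Xs 2) * τ (Xs 3) (Xs 1) (Xs 4) - ω (Xs 0) (Xs 2) * τ (Xs 3) (Xs 4) (Xs 1) - ω (Xs 0) (Xs 2) * τ (Xs 4) (Xs 1) (Xs 3) + ω (Xs 0) (Xs 2) * τ (Xs 4) (Xs 3) (Xs 1) + ω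 (Xs 0) (Xs 3) * τ (Xs 1) (Xs 2) (Xs 4) - ω (Xs 0) (Xs 3) * τ (Xs 1) (Xs 4) (Xs 2) - ω (Xs 0) (Xs 3) * τ (Xs 2) (Xs 1) (Xs 4) + ω (Xs 0) (Xs 3) * τ (Xs 2) (Xs 4) (Xs 1) + ω (Xs 0) (Xs 3) * τ (Xs 4) (Xs 1) (Xs 2) - ω (Xs 0) (Xs 3) * τ (Xs 4) (Xs 2) (Xs 1) - ω (Xs 0) (Xs 4) * τ (Xs 1) (Xs 2) (Xs 3) + ω (Xs 0) (Xs 4) * τ (Xs 1) (Xs 3) (Xs 2) + ω (Xs 0) (Xs 4) * τ (Xs 2) (Xs 1) (Xs 3) - ω (Xs 0) (Xs 4) * τ (Xs 2) (Xs 3) (Xs 1) - ω (Xs 0) (Xs 4) * τ (Xs 3) (Xs 1) (Xs 2) + ω (Xs 0) (Xs 4) * τ (Xs 3) (Xs 2) (Xs 1) - ω (Xs 1) (Xs 0) * τ (Xs 2) (Xs 3) (Xs 4) + ω (Xs 1) (Xs 0) * τ (Xs 2) (Xs 4) (Xs 3) + ω (Xs 1) (Xs 0) * τ (Xs 3) (Xs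 2) (Xs 4) - ω (Xs 1) (Xs 0) * τ (Xs 3) (Xs 4) (Xs 2) - ω (Xs 1) (Xs 0) * τ (Xs 4) (Xs 2) (Xs 3) + ω (Xs 1) (Xs 0) * τ (Xs 4) (Xs 3) (Xs 2) + ω (Xs 1) (Xs 2) * τ (Xs 0) (Xs 3) (Xs 4) - ω (Xs 1) (Xs 2) * τ (Xs 0) (Xs 4) (Xs 3) - ω (Xs 1) (Xs 2) * τ (Xs 3) (Xs 0) (Xs 4) + ω (Xs 1) (Xs 2) * τ (Xs 3) (Xs 4) (Xs 0) + ω (Xs 1) (Xs 2) * τ (Xs 4) (Xs 0) (Xs 3) - ω (Xs 1) (Xs 2) * τ (Xs 4) (Xs 3) (Xs 0) - ω (Xs 1) (Xs 3) * τ (Xs 0) (Xs 2) (Xs 4) + ω (Xs 1) (Xs 3) * τ (Xs 0) (Xs 4) (Xs 2) + ω (Xs 1) (Xs 3) * τ (Xs 2) (Xs 0) (Xs 4) - ω (Xs 1) (Xs 3) * τ (Xs 2) (Xs 4) (Xs 0) - ω (Xs 1) (Xs 3) * τ (Xs 4) (Xs 0) (Xs 2) + ω (Xs 1) (Xs 3)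 * τ (Xs 4) (Xs 2) (Xs 0) + ω (Xs 1) (Xs 4) * τ (Xs 0) (Xs 2) (Xs 3) - ω (Xs 1) (Xs 4) * τ (Xs 0) (Xs 3) (Xs 2) - ω (Xs 1) (Xs 4) * τ (Xs 2) (Xs 0) (Xs 3) + ω (Xs 1) (Xs 4) * τ (Xs 2) (Xs 3) (Xs 0) + ω (Xs 1) (Xs 4) * τ (Xs 3) (Xs 0) (Xs 2) - ω (Xs 1) (Xs 4) * τ (Xs 3) (Xs 2) (Xs 0) + ω (Xs 2) (Xs 0) * τ (Xs 1) (Xs 3) (Xs 4) - ω (Xs 2) (Xs 0) * τ (Xs 1) (Xs 4) (Xs 3) - ω (Xs 2) (Xs 0) * τ (Xs 3) (Xs 1) (Xs 4) + ω (Xs 2) (Xs 0) * τ (Xs 3) (Xs 4) (Xs 1) + ω (Xs 2) (Xs 0) * τ (Xs 4) (Xs 1) (Xs 3) - ω (Xs 2) (Xs 0) * τ (Xs 4) (Xs 3) (Xs 1) - ω (Xs 2) (Xs 1) * τ (Xs 0) (Xs 3) (Xs 4) + ω (Xs 2) (Xs 1) * τ (Xs 0) (Xs 4) (Xs 3) +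 ω (Xs 2) (Xs 1) * τ (Xs 3) (Xs 0) (Xs 4) - ω (Xs 2) (Xs 1) * τ (Xs 3) (Xs 4) (Xs 0) - ω (Xs 2) (Xs 1) * τ (Xs 4) (Xs 0) (Xs 3) + ω (Xs 2) (Xs 1) * τ (Xs 4) (Xs 3) (Xs 0) + ω (Xs 2) (Xs 3) * τ (Xs 0) (Xs 1) (Xs 4) - ω (Xs 2) (Xs 3) * τ (Xs 0) (Xs 4) (Xs 1) - ω (Xs 2) (Xs 3) * τ (Xs 1) (Xs 0) (Xs 4) + ω (Xs 2) (Xs 3) * τ (Xs 1) (Xs 4) (Xs 0) + ω (Xs 2) (Xs 3) * τ (Xs 4) (Xs 0) (Xs 1) - ω (Xs 2) (Xs 3) * τ (Xs 4) (Xs 1) (Xs 0) - ω (Xs 2) (Xs 4) * τ (Xs 0) (Xs 1) (Xs 3) + ω (Xs 2) (Xs 4) * τ (Xs 0) (Xs 3) (Xs 1) + ω (Xs 2) (Xs 4) * τ (Xs 1) (Xs 0) (Xs 3) - ω (Xs 2) (Xs 4) * τ (Xs 1) (Xs 3) (Xs 0) - ω (Xs 2) (Xs 4) * τ (Xs 3)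 (Xs 0) (Xs 1) + ω (Xs 2) (Xs 4) * τ (Xs 3) (Xs 1) (Xs 0) - ω (Xs 3) (Xs 0) * τ (Xs 1) (Xs 2) (Xs 4) + ω (Xs 3) (Xs 0) * τ (Xs 1) (Xs 4) (Xs 2) + ω (Xs 3) (Xs 0) * τ (Xs 2) (Xs 1) (Xs 4) - ω (Xs 3) (Xs 0) * τ (Xs 2) (Xs 4) (Xs 1) - ω (Xs 3) (Xs 0) * τ (Xs 4) (Xs 1) (Xs 2) + ω (Xs 3) (Xs 0) * τ (Xs 4) (Xs 2) (Xs 1) + ω (Xs 3) (Xs 1) * τ (Xs 0) (Xs 2) (Xs 4) - ω (Xs 3) (Xs 1) * τ (Xs 0) (Xs 4) (Xs 2) - ω (Xs 3) (Xs 1) * τ (Xs 2) (Xs 0) (Xs 4) + ω (Xs 3) (Xs 1) * τ (Xs 2) (Xs 4) (Xs 0) + ω (Xs 3) (Xs 1) * τ (Xs 4) (Xs 0) (Xs 2) - ω (Xs 3) (Xs 1) * τ (Xs 4) (Xs 2) (Xs 0) - ω (Xs 3) (Xs 2) * τ (Xs 0) (Xs 1) (Xs 4) + ω (Xs 3) (Xs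 2) * τ (Xs 0) (Xs 4) (Xs 1) + ω (Xs 3) (Xs 2) * τ (Xs 1) (Xs 0) (Xs 4) - ω (Xs 3) (Xs 2) * τ (Xs 1) (Xs 4) (Xs 0) - ω (Xs 3) (Xs 2) * τ (Xs 4) (Xs 0) (Xs 1) + ω (Xs 3) (Xs 2) * τ (Xs 4) (Xs 1) (Xs 0) + ω (Xs 3) (Xs 4) * τ (Xs 0) (Xs 1) (Xs 2) - ω (Xs 3) (Xs 4) * τ (Xs 0) (Xs 2) (Xs 1) - ω (Xs 3) (Xs 4) * τ (Xs 1) (Xs 0) (Xs 2) + ω (Xs 3) (Xs 4) * τ (Xs 1) (Xs 2) (Xs 0) + ω (Xs 3) (Xs 4) * τ (Xs 2) (Xs 0) (Xs 1) - ω (Xs 3) (Xs 4) * τ (Xs 2) (Xs 1) (Xs 0) + ω (Xs 4) (Xs 0) * τ (Xs 1) (Xs 2) (Xs 3) - ω (Xs 4) (Xs 0) * τ (Xs 1) (Xs 3) (Xs 2) - ω (Xs 4) (Xs 0) * τ (Xs 2) (Xs 1) (Xs 3) + ω (Xs 4) (Xs 0) * τ (Xs 2) (Xs 3) (Xs 1)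 + ω (Xs 4) (Xs 0) * τ (Xs 3) (Xs 1) (Xs 2) - ω (Xs 4) (Xs 0) * τ (Xs 3) (Xs 2) (Xs 1) - ω (Xs 4) (Xs 1) * τ (Xs 0) (Xs 2) (Xs 3) + ω (Xs 4) (Xs 1) * τ (Xs 0) (Xs 3) (Xs 2) + ω (Xs 4) (Xs 1) * τ (Xs 2) (Xs 0) (Xs 3) - ω (Xs 4) (Xs 1) * τ (Xs 2) (Xs 3) (Xs 0) - ω (Xs 4) (Xs 1) * τ (Xs 3) (Xs 0) (Xs 2) + ω (Xs 4) (Xs 1) * τ (Xs 3) (Xs 2) (Xs 0) + ω (Xs 4) (Xs 2) * τ (Xs 0) (Xs 1) (Xs 3) - ω (Xs 4) (Xs 2) * τ (Xs 0) (Xs 3) (Xs 1) - ω (Xs 4) (Xs 2) * τ (Xs 1) (Xs 0) (Xs 3) + ω (Xs 4) (Xs 2) * τ (Xs 1) (Xs 3) (Xs 0) + ω (Xs 4) (Xs 2) * τ (Xs 3) (Xs 0) (Xs 1) - ω (Xs 4) (Xs 2) * τ (Xs 3) (Xs 1) (Xs 0) - ω (Xs 4) (Xs 3) * τ (Xs 0)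 (Xs 1) (Xs 2) + ω (Xs 4) (Xs 3) * τ (Xs 0) (Xs 2) (Xs 1) + ω (Xs 4) (Xs 3) * τ (Xs 1) (Xs 0) (Xs 2) - ω (Xs 4) (Xs 3) * τ (Xs 1) (Xs 2) (Xs 0) - ω (Xs 4) (Xs 3) * τ (Xs 2) (Xs 0) (Xs 1) + ω (Xs 4) (Xs 3) * τ (Xs 2) (Xs 1) (Xs 0)) := by
  rw [wedge23]
  congr 1
  exact perm5_expand (fun a b c d e' => ω (Xs a) (Xs b) * τ (Xs c) (Xs d) (Xs e'))

set_option maxHeartbeats 3200000 in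
private lemma form2_eval (w : Fin 6 → Fin 6 → ℝ) (i j : Fin 6) :
    form2 w (e i) (e j) = if i < j then w i j else if j < i then -w j i else 0 := by
  fin_cases i <;> fin_cases j <;>
    simp (config := { decide := true }) [form2, e, Pi.single_apply, Fin.sum_univ_six]

private lemma form2_add_left (w : Fin 6 → Fin 6 → ℝ) (X X' Y : V) :
    form2 w (X + X') Y = form2 w X Y + form2 w X' Y := by
  simp only [form2, Pi.add_apply]
  rw [← Finset.sum_add_distrib]
  refine Finset.sum_congr rfl fun i _ => ?_
  rw [← Finset.sum_add_distrib]
  refine Finset.sum_congr rfl fun j _ => ?_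
  split <;> ring

private lemma form2_smul_left (w : Fin 6 → Fin 6 → ℝ) (c : ℝ) (X Y : V) :
    form2 w (c • X) Y = c * form2 w X Y := by
  simp only [form2, Pi.smul_apply, smul_eq_mul, Finset.mul_sum]
  refine Finset.sum_congr rfl fun i _ => Finset.sum_congr rfl fun j _ => ?_
  split <;> ring

private lemma form2_bra (w : Fin 6 → Fin 6 → ℝ) (X Y Z : V) :
    form2 w (bra X Y) Z = (X 0 * Y 1 - X 1 * Y 0) * form2 w (e 2) Z
      + (X 0 * Y 2 - X 2 * Y 0) * form2 w (e 3) Z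
      + (X 1 * Y 2 - X 2 * Y 1) * form2 w (e 4) Z := by
  rw [bra, form2_add_left, form2_add_left, form2_smul_left, form2_smul_left, form2_smul_left]

private lemma e_apply (i j : Fin 6) : e i j = if j = i then 1 else 0 := Pi.single_apply i 1 j

end Aux

set_option maxHeartbeats 4000000 in
set_option maxRecDepth 8000 in
/-- if a 2-form `ω = Σ w_{ij} e^i∧e^j` on 𝔤₂ is non-degenerate and
satisfies `ω∧dω = 0`, then `w₄₅ = w₄₆ = w₅₆ = 0`, i.e.
`ω(e₄,e₅) = ω(e₄,e₆) = ω(e₅,e₆) = 0` (0-indexed below). -/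
theorem statement11 (w : Fin 6 → Fin 6 → ℝ)
    (hnd : ∀ X : V, (∀ Y : V, form2 w X Y = 0) → X = 0)
    (hsk : ∀ Xs : Fin 5 → V, wedge23 (form2 w) (dOm (form2 w)) Xs = 0) :
    w 3 4 = 0 ∧ w 3 5 = 0 ∧ w 4 5 = 0 := by
  have hA := hsk ![e 0, e 1, e 2, e 3, e 5]
  rw [wedge23_expand] at hA
  simp (config := { decide := true }) only [Matrix.cons_val_zero, Matrix.cons_val_one,
    Matrix.head_cons, Matrix.cons_val_two, Matrix.tail_cons, Matrix.cons_val_three,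
    Matrix.cons_val_four, Matrix.cons_val_fin_one, dOm, form2_bra, form2_eval,
    e_apply, if_true, if_false] at hA
  norm_num at hA
  ring_nf at hA
  have hB := hsk ![e 0, e 1, e 2, e 4, e 5]
  rw [wedge23_expand] at hB
  simp (config := { decide := true }) only [Matrix.cons_val_zero, Matrix.cons_val_one,
    Matrix.head_cons, Matrix.cons_val_two, Matrix.tail_cons, Matrix.cons_val_three,
    Matrix.cons_val_four, Matrix.cons_val_fin_one, dOm, form2_bra, form2_eval,
    e_apply, if_true, if_false] at hB
  norm_num at hB
  ring_nf at hB
  have hC := hsk ![e 0, e 1, e 3, e 4, e 5]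
  rw [wedge23_expand] at hC
  simp (config := { decide := true }) only [Matrix.cons_val_zero, Matrix.cons_val_one,
    Matrix.head_cons, Matrix.cons_val_two, Matrix.tail_cons, Matrix.cons_val_three,
    Matrix.cons_val_four, Matrix.cons_val_fin_one, dOm, form2_bra, form2_eval,
    e_apply, if_true, if_false] at hC
  norm_num at hC
  ring_nf at hC
  have hz := hnd (fun m => if m = 3 then w 4 5 else if m = 4 then -w 3 5 else
      if m = 5 then w 3 4 else 0) ?_
  · have h3 := congrFun hz 3
    have h4 := congrFun hz 4
    have h5 := congrFun hz 5
    simp (config := { decide := true }) only [if_true, if_false, Pi.zero_apply,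
      neg_eq_zero] at h3 h4 h5
    exact ⟨h5, h4, h3⟩
  · intro Y
    simp (config := { decide := true }) only [form2, Fin.sum_univ_six, if_true, if_false]
    norm_num
    linear_combination (Y 0 / 12) * hA + (Y 1 / 12) * hB + (Y 2 / 12) * hC
end
end

section
/- Let P be the endomorphism of 𝔤₂ with P e₁ = e₁, P e₂ = −e₂, P e₃ = e₃, P e₄ = e₄, P e₅ = −e₅, P e₆ = −e₆. Then P² = Id, the (+1)-eigenspace span{e₁,e₃,e₄} and the (−1)-eigenspace span{e₂,e₅,e₆} are both Lie subalgebras of 𝔤₂, and the Nijenhuis tensor N_P vanishes identically, so P is an integrable paracomplex structure on 𝔤₂. -/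
open Finset

noncomputable section

/-- The Nijenhuis tensor of an endomorphism `P` with `P² = Id`:
`N_P(X,Y) = [PX,PY] + [X,Y] − P[PX,Y] − P[X,PY]`. -/
def nijP (P : V → V) (X Y : V) : V :=
  bra (P X) (P Y) + bra X Y - P (bra (P X) Y) - P (bra X (P Y))

/-- The paracomplex structure `P = diag{+1,−1,+1,+1,−1,−1}` on 𝔤₂ (0-indexed). -/
def Pg2 : V → V := fun X =>
  X 0 • e 0 - X 1 • e 1 + X 2 • e 2 + X 3 • e 3 - X 4 • e 4 - X 5 • e 5

@[simp] lemma cons_val_five {α : Type*} (a0 a1 a2 a3 a4 a5 : α) :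
    ![a0, a1, a2, a3, a4, a5] (5 : Fin 6) = a5 := rfl

def S1 : Submodule ℝ V where
  carrier := {X | X 1 = 0 ∧ X 4 = 0 ∧ X 5 = 0}
  add_mem' := by rintro a b ⟨h1,h2,h3⟩ ⟨g1,g2,g3⟩; simp_all [Pi.add_apply]
  zero_mem' := by simp
  smul_mem' := by rintro c a ⟨h1,h2,h3⟩; simp_all [Pi.smul_apply]

def S2 : Submodule ℝ V where
  carrier := {X | X 0 = 0 ∧ X 2 = 0 ∧ X 3 = 0}
  add_mem' := by rintro a b ⟨h1,h2,h3⟩ ⟨g1,g2,g3⟩; simp_all [Pi.add_apply]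
  zero_mem' := by simp
  smul_mem' := by rintro c a ⟨h1,h2,h3⟩; simp_all [Pi.smul_apply]

lemma mem_spanA (X : V) :
    X ∈ Submodule.span ℝ ({e 0, e 2, e 3} : Set V) ↔ X 1 = 0 ∧ X 4 = 0 ∧ X 5 = 0 := by
  constructor
  · intro h
    have : Submodule.span ℝ ({e 0, e 2, e 3} : Set V) ≤ S1 := by
      rw [Submodule.span_le]
      rintro x (rfl | rfl | rfl) <;> exact ⟨by simp [Matrix.cons_val_succ, e, Pi.single], by simp [Matrix.cons_val_succ, e, Pi.single], by simp [Matrix.cons_val_succ, e, Pi.single]⟩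
    exact this h
  · rintro ⟨h1, h4, h5⟩
    have hX : X = X 0 • e 0 + X 2 • e 2 + X 3 • e 3 := by
      funext i; fin_cases i <;> simp [Matrix.cons_val_succ, e, Pi.single_apply, h1, h4, h5]
    rw [hX]
    refine Submodule.add_mem _ (Submodule.add_mem _ ?_ ?_) ?_ <;>
      exact Submodule.smul_mem _ _ (Submodule.subset_span (by simp))
  
lemma mem_spanB (X : V) :
    X ∈ Submodule.span ℝ ({e 1, e 4, e 5} : Set V) ↔ X 0 = 0 ∧ X 2 = 0 ∧ X 3 = 0 := by
  constructor
  · intro h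
    have : Submodule.span ℝ ({e 1, e 4, e 5} : Set V) ≤ S2 := by
      rw [Submodule.span_le]
      rintro x (rfl | rfl | rfl) <;> exact ⟨by simp [Matrix.cons_val_succ, e, Pi.single], by simp [Matrix.cons_val_succ, e, Pi.single], by simp [Matrix.cons_val_succ, e, Pi.single]⟩
    exact this h
  · rintro ⟨h1, h4, h5⟩
    have hX : X = X 1 • e 1 + X 4 • e 4 + X 5 • e 5 := by
      funext i; fin_cases i <;> simp [Matrix.cons_val_succ, e, Pi.single_apply, h1, h4, h5]
    rw [hX]
    refine Submodule.add_mem _ (Submodule.add_mem _ ?_ ?_) ?_ <;>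
      exact Submodule.smul_mem _ _ (Submodule.subset_span (by simp))

lemma Pg2_apply (X : V) (i : Fin 6) :
    Pg2 X i = ![X 0, -X 1, X 2, X 3, -X 4, -X 5] i := by
  fin_cases i <;> simp [Matrix.cons_val_succ, Pg2, e, Pi.single_apply] <;> ring

lemma bra_apply (X Y : V) (i : Fin 6) :
    bra X Y i = ![0, 0, X 0 * Y 1 - X 1 * Y 0, X 0 * Y 2 - X 2 * Y 0,
      X 1 * Y 2 - X 2 * Y 1, 0] i := by
  fin_cases i <;> simp [Matrix.cons_val_succ, bra, e, Pi.single_apply] <;> ring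

/-- `P² = Id`; the `(+1)`-eigenspace of `P` is `span{e₁,e₃,e₄}` and the
`(−1)`-eigenspace is `span{e₂,e₅,e₆}`; both eigenspaces are Lie subalgebras of 𝔤₂;
and the Nijenhuis tensor of `P` vanishes identically, so `P` is an integrable
paracomplex structure on 𝔤₂ (0-indexed below). -/
theorem statement12 :
    (∀ X : V, Pg2 (Pg2 X) = X) ∧
    ({X : V | Pg2 X = X} = ↑(Submodule.span ℝ ({e 0, e 2, e 3} : Set V))) ∧
    ({X : V | Pg2 X = -X} = ↑(Submodule.span ℝ ({e 1, e 4, e 5} : Set V))) ∧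
    (∀ X Y : V, X ∈ Submodule.span ℝ ({e 0, e 2, e 3} : Set V) →
      Y ∈ Submodule.span ℝ ({e 0, e 2, e 3} : Set V) →
      bra X Y ∈ Submodule.span ℝ ({e 0, e 2, e 3} : Set V)) ∧
    (∀ X Y : V, X ∈ Submodule.span ℝ ({e 1, e 4, e 5} : Set V) →
      Y ∈ Submodule.span ℝ ({e 1, e 4, e 5} : Set V) →
      bra X Y ∈ Submodule.span ℝ ({e 1, e 4, e 5} : Set V)) ∧
    (∀ X Y : V, nijP Pg2 X Y = 0) := by
  refine ⟨?_, ?_, ?_, ?_, ?_, ?_⟩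
  · intro X; funext i
    rw [Pg2_apply]
    fin_cases i <;> simp [Matrix.cons_val_succ, Pg2_apply]
  · ext X
    simp only [Set.mem_setOf_eq, SetLike.mem_coe, mem_spanA]
    constructor
    · intro h
      refine ⟨?_, ?_, ?_⟩ <;>
        [have := congrFun h 1; have := congrFun h 4; have := congrFun h 5] <;>
        rw [Pg2_apply] at this <;> simp [Matrix.cons_val_succ] at this <;> linarith
    · rintro ⟨h1, h4, h5⟩
      funext i; rw [Pg2_apply]; fin_cases i <;> simp [Matrix.cons_val_succ, h1, h4, h5]
  · ext X
    simp only [Set.mem_setOf_eq, SetLike.mem_coe, mem_spanB]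
    constructor
    · intro h
      refine ⟨?_, ?_, ?_⟩ <;>
        [have := congrFun h 0; have := congrFun h 2; have := congrFun h 3] <;>
        rw [Pg2_apply] at this <;> simp [Matrix.cons_val_succ, Pi.neg_apply] at this <;> linarith
    · rintro ⟨h1, h4, h5⟩
      funext i; rw [Pg2_apply]; fin_cases i <;> simp [Matrix.cons_val_succ, h1, h4, h5, Pi.neg_apply]
  · intro X Y hX hY
    rw [mem_spanA] at *
    obtain ⟨x1, x4, x5⟩ := hX; obtain ⟨y1, y4, y5⟩ := hY
    exact ⟨by rw [bra_apply]; simp [Matrix.cons_val_succ], by rw [bra_apply]; simp [Matrix.cons_val_succ, x1, y1], by rw [bra_apply]; simp [Matrix.cons_val_succ]⟩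
  · intro X Y hX hY
    rw [mem_spanB] at *
    obtain ⟨x1, x4, x5⟩ := hX; obtain ⟨y1, y4, y5⟩ := hY
    exact ⟨by rw [bra_apply]; simp [Matrix.cons_val_succ], by rw [bra_apply]; simp [Matrix.cons_val_succ, x1, y1], by rw [bra_apply]; simp [Matrix.cons_val_succ, x1, x4, y1, y4]⟩
  · intro X Y
    funext i
    simp only [nijP, Pi.add_apply, Pi.sub_apply, Pg2_apply, bra_apply, Pi.zero_apply]
    fin_cases i <;> simp [Matrix.cons_val_succ, bra_apply, Pg2_apply] <;> ring
end
end

section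
/- Let ω₀ = e¹∧e⁵ − e²∧e⁴ − e³∧e⁶ on 𝔤₂, let ψ₁₁, ψ₁₂, ψ₃₂, ψ₃₃, ψ₄₁, ψ₄₂, ψ₄₃, ψ₆₃ be real parameters with ψ₁₂ ≠ 0 and ψ₆₃ ≠ 0, and let J be the endomorphism of 𝔤₂ whose matrix in the basis e₁,…,e₆ is: J e₁ = ψ₁₁ e₁ − ((ψ₁₁²+1)/ψ₁₂) e₂ + A e₃ + ψ₄₁ e₄ + B e₅ + C e₆, J e₂ = ψ₁₂ e₁ − ψ₁₁ e₂ + ψ₃₂ e₃ + ψ₄₂ e₄ − ψ₄₁ e₅ + ψ₄₃ e₆, J e₃ = ψ₃₃ e₃ + ψ₄₃ e₄ − C e₅ + ψ₆₃ e₆, J e₄ = ψ₁₁ e₄ − ((ψ₁₁²+1)/ψ₁₂) e₅, J e₅ = ψ₁₂ e₄ − ψ₁₁ e₅, J e₆ = −((ψ₃₃²+1)/ψ₆₃) e₃ − ψ₃₂ e₄ + A e₅ − ψ₃₃ e₆, where A = (ψ₁₁ψ₃₂ψ₆₃ − ψ₃₂ψ₃₃ψ₆₃ + ψ₃₃²ψ₄₃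 + ψ₄₃)/(ψ₁₂ψ₆₃), B = (ψ₁₁²ψ₄₂ψ₆₃ − 2ψ₁₁ψ₁₂ψ₄₁ψ₆₃ − ψ₃₂²ψ₆₃² + 2ψ₃₂ψ₃₃ψ₄₃ψ₆₃ − ψ₃₃²ψ₄₃² + ψ₄₂ψ₆₃ − ψ₄₃²)/(ψ₁₂²ψ₆₃), and C = (ψ₁₁ψ₄₃ − ψ₃₂ψ₆₃ + ψ₃₃ψ₄₃)/ψ₁₂. Then J² = −Id, the Nijenhuis tensor N_J vanishes identically, and ω₀(JX,JY) = ω₀(X,Y) for all X, Y ∈ 𝔤₂. -/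
open Finset

noncomputable section

/-- The Nijenhuis tensor of an endomorphism `J` with `J² = −Id`:
`N_J(X,Y) = [JX,JY] − [X,Y] − J[JX,Y] − J[X,JY]`. -/
def nijJ (J : V → V) (X Y : V) : V :=
  bra (J X) (J Y) - bra X Y - J (bra (J X) Y) - J (bra X (J Y))

/-- The semi-Kähler 2-form `ω₀ = e¹∧e⁵ − e²∧e⁴ − e³∧e⁶` on 𝔤₂ (0-indexed). -/
def om0 : V → V → ℝ :=
  form2
    ![![0, 0, 0, 0, 1, 0],
      ![0, 0, 0, -1, 0, 0],
      ![0, 0, 0, 0, 0, -1],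
      ![0, 0, 0, 0, 0, 0],
      ![0, 0, 0, 0, 0, 0],
      ![0, 0, 0, 0, 0, 0]]

/-- The nilpotent complex structure (7) on 𝔤₂, depending on parameters
`ψ₁₁, ψ₁₂, ψ₃₂, ψ₃₃, ψ₄₁, ψ₄₂, ψ₄₃, ψ₆₃` (0-indexed below; `A`, `B`, `C` are the
stated rational functions of the parameters). -/
def Jg2 (p11 p12 p32 p33 p41 p42 p43 p63 : ℝ) : V → V :=
  let A : ℝ := (p11 * p32 * p63 - p32 * p33 * p63 + p33 ^ 2 * p43 + p43) / (p12 * p63)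
  let B : ℝ :=
    (p11 ^ 2 * p42 * p63 - 2 * p11 * p12 * p41 * p63 - p32 ^ 2 * p63 ^ 2 +
        2 * p32 * p33 * p43 * p63 - p33 ^ 2 * p43 ^ 2 + p42 * p63 - p43 ^ 2) /
      (p12 ^ 2 * p63)
  let C : ℝ := (p11 * p43 - p32 * p63 + p33 * p43) / p12
  fun X =>
    X 0 • (p11 • e 0 - ((p11 ^ 2 + 1) / p12) • e 1 + A • e 2 + p41 • e 3 +
        B • e 4 + C • e 5) +
    X 1 • (p12 • e 0 - p11 • e 1 + p32 • e 2 + p42 • e 3 - p41 • e 4 + p43 • e 5) +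
    X 2 • (p33 • e 2 + p43 • e 3 - C • e 4 + p63 • e 5) +
    X 3 • (p11 • e 3 - ((p11 ^ 2 + 1) / p12) • e 4) +
    X 4 • (p12 • e 3 - p11 • e 4) +
    X 5 • (-((p33 ^ 2 + 1) / p63) • e 2 - p32 • e 3 + A • e 4 - p33 • e 5)

set_option maxRecDepth 10000 in
lemma form2_eq (w : Fin 6 → Fin 6 → ℝ) (X Y : V) : form2 w X Y =
    w 0 1 * (X 0 * Y 1 - X 1 * Y 0) + w 0 2 * (X 0 * Y 2 - X 2 * Y 0) +
    w 0 3 * (X 0 * Y 3 - X 3 * Y 0) + w 0 4 * (X 0 * Y 4 - X 4 * Y 0) +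
    w 0 5 * (X 0 * Y 5 - X 5 * Y 0) + w 1 2 * (X 1 * Y 2 - X 2 * Y 1) +
    w 1 3 * (X 1 * Y 3 - X 3 * Y 1) + w 1 4 * (X 1 * Y 4 - X 4 * Y 1) +
    w 1 5 * (X 1 * Y 5 - X 5 * Y 1) + w 2 3 * (X 2 * Y 3 - X 3 * Y 2) +
    w 2 4 * (X 2 * Y 4 - X 4 * Y 2) + w 2 5 * (X 2 * Y 5 - X 5 * Y 2) +
    w 3 4 * (X 3 * Y 4 - X 4 * Y 3) + w 3 5 * (X 3 * Y 5 - X 5 * Y 3) +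
    w 4 5 * (X 4 * Y 5 - X 5 * Y 4) := by
  simp only [form2, Fin.sum_univ_six]
  norm_num [Fin.lt_def,
    show ((0:Fin 6):ℕ)=0 from rfl, show ((1:Fin 6):ℕ)=1 from rfl,
    show ((2:Fin 6):ℕ)=2 from rfl, show ((3:Fin 6):ℕ)=3 from rfl,
    show ((4:Fin 6):ℕ)=4 from rfl, show ((5:Fin 6):ℕ)=5 from rfl]
  ring


lemma om0_eq (X Y : V) : om0 X Y =
    (X 0 * Y 4 - X 4 * Y 0) - (X 1 * Y 3 - X 3 * Y 1) - (X 2 * Y 5 - X 5 * Y 2) := by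
  show form2 _ X Y = _
  rw [form2_eq]
  simp only [show (![![(0:ℝ), 0, 0, 0, 1, 0],![0, 0, 0, -1, 0, 0],![0, 0, 0, 0, 0, -1],![0, 0, 0, 0, 0, 0],![0, 0, 0, 0, 0, 0],![0, 0, 0, 0, 0, 0]] : Fin 6 → Fin 6 → ℝ) 0 1 = 0 from rfl,
    show (![![(0:ℝ), 0, 0, 0, 1, 0],![0, 0, 0, -1, 0, 0],![0, 0, 0, 0, 0, -1],![0, 0, 0, 0, 0, 0],![0, 0, 0, 0, 0, 0],![0, 0, 0, 0, 0, 0]] : Fin 6 → Fin 6 → ℝ) 0 2 = 0 from rfl,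
    show (![![(0:ℝ), 0, 0, 0, 1, 0],![0, 0, 0, -1, 0, 0],![0, 0, 0, 0, 0, -1],![0, 0, 0, 0, 0, 0],![0, 0, 0, 0, 0, 0],![0, 0, 0, 0, 0, 0]] : Fin 6 → Fin 6 → ℝ) 0 3 = 0 from rfl,
    show (![![(0:ℝ), 0, 0, 0, 1, 0],![0, 0, 0, -1, 0, 0],![0, 0, 0, 0, 0, -1],![0, 0, 0, 0, 0, 0],![0, 0, 0, 0, 0, 0],![0, 0, 0, 0, 0, 0]] : Fin 6 → Fin 6 → ℝ) 0 4 = 1 from rfl,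
    show (![![(0:ℝ), 0, 0, 0, 1, 0],![0, 0, 0, -1, 0, 0],![0, 0, 0, 0, 0, -1],![0, 0, 0, 0, 0, 0],![0, 0, 0, 0, 0, 0],![0, 0, 0, 0, 0, 0]] : Fin 6 → Fin 6 → ℝ) 0 5 = 0 from rfl,
    show (![![(0:ℝ), 0, 0, 0, 1, 0],![0, 0, 0, -1, 0, 0],![0, 0, 0, 0, 0, -1],![0, 0, 0, 0, 0, 0],![0, 0, 0, 0, 0, 0],![0, 0, 0, 0, 0, 0]] : Fin 6 → Fin 6 → ℝ) 1 2 = 0 from rfl,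
    show (![![(0:ℝ), 0, 0, 0, 1, 0],![0, 0, 0, -1, 0, 0],![0, 0, 0, 0, 0, -1],![0, 0, 0, 0, 0, 0],![0, 0, 0, 0, 0, 0],![0, 0, 0, 0, 0, 0]] : Fin 6 → Fin 6 → ℝ) 1 3 = -1 from rfl,
    show (![![(0:ℝ), 0, 0, 0, 1, 0],![0, 0, 0, -1, 0, 0],![0, 0, 0, 0, 0, -1],![0, 0, 0, 0, 0, 0],![0, 0, 0, 0, 0, 0],![0, 0, 0, 0, 0, 0]] : Fin 6 → Fin 6 → ℝ) 1 4 = 0 from rfl,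
    show (![![(0:ℝ), 0, 0, 0, 1, 0],![0, 0, 0, -1, 0, 0],![0, 0, 0, 0, 0, -1],![0, 0, 0, 0, 0, 0],![0, 0, 0, 0, 0, 0],![0, 0, 0, 0, 0, 0]] : Fin 6 → Fin 6 → ℝ) 1 5 = 0 from rfl,
    show (![![(0:ℝ), 0, 0, 0, 1, 0],![0, 0, 0, -1, 0, 0],![0, 0, 0, 0, 0, -1],![0, 0, 0, 0, 0, 0],![0, 0, 0, 0, 0, 0],![0, 0, 0, 0, 0, 0]] : Fin 6 → Fin 6 → ℝ) 2 3 = 0 from rfl,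
    show (![![(0:ℝ), 0, 0, 0, 1, 0],![0, 0, 0, -1, 0, 0],![0, 0, 0, 0, 0, -1],![0, 0, 0, 0, 0, 0],![0, 0, 0, 0, 0, 0],![0, 0, 0, 0, 0, 0]] : Fin 6 → Fin 6 → ℝ) 2 4 = 0 from rfl,
    show (![![(0:ℝ), 0, 0, 0, 1, 0],![0, 0, 0, -1, 0, 0],![0, 0, 0, 0, 0, -1],![0, 0, 0, 0, 0, 0],![0, 0, 0, 0, 0, 0],![0, 0, 0, 0, 0, 0]] : Fin 6 → Fin 6 → ℝ) 2 5 = -1 from rfl,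
    show (![![(0:ℝ), 0, 0, 0, 1, 0],![0, 0, 0, -1, 0, 0],![0, 0, 0, 0, 0, -1],![0, 0, 0, 0, 0, 0],![0, 0, 0, 0, 0, 0],![0, 0, 0, 0, 0, 0]] : Fin 6 → Fin 6 → ℝ) 3 4 = 0 from rfl,
    show (![![(0:ℝ), 0, 0, 0, 1, 0],![0, 0, 0, -1, 0, 0],![0, 0, 0, 0, 0, -1],![0, 0, 0, 0, 0, 0],![0, 0, 0, 0, 0, 0],![0, 0, 0, 0, 0, 0]] : Fin 6 → Fin 6 → ℝ) 3 5 = 0 from rfl,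
    show (![![(0:ℝ), 0, 0, 0, 1, 0],![0, 0, 0, -1, 0, 0],![0, 0, 0, 0, 0, -1],![0, 0, 0, 0, 0, 0],![0, 0, 0, 0, 0, 0],![0, 0, 0, 0, 0, 0]] : Fin 6 → Fin 6 → ℝ) 4 5 = 0 from rfl]
  ring

variable {p11 p12 p32 p33 p41 p42 p43 p63 : ℝ}
local notation "JJ" => Jg2 p11 p12 p32 p33 p41 p42 p43 p63

section complemmas
set_option maxHeartbeats 1000000

lemma J0 (X : V) : JJ X 0 = p11 * X 0 + p12 * X 1 := by
  simp only [Jg2, e, Pi.add_apply, Pi.sub_apply, Pi.smul_apply, Pi.neg_apply,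
    smul_eq_mul, Pi.single_apply]
  norm_num [Fin.ext_iff, show ((0:Fin 6):ℕ)=0 from rfl, show ((1:Fin 6):ℕ)=1 from rfl,
    show ((2:Fin 6):ℕ)=2 from rfl, show ((3:Fin 6):ℕ)=3 from rfl,
    show ((4:Fin 6):ℕ)=4 from rfl, show ((5:Fin 6):ℕ)=5 from rfl]
  try ring

lemma J1 (X : V) : JJ X 1 = -((p11 ^ 2 + 1) / p12) * X 0 - p11 * X 1 := by
  simp only [Jg2, e, Pi.add_apply, Pi.sub_apply, Pi.smul_apply, Pi.neg_apply,
    smul_eq_mul, Pi.single_apply]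
  norm_num [Fin.ext_iff, show ((0:Fin 6):ℕ)=0 from rfl, show ((1:Fin 6):ℕ)=1 from rfl,
    show ((2:Fin 6):ℕ)=2 from rfl, show ((3:Fin 6):ℕ)=3 from rfl,
    show ((4:Fin 6):ℕ)=4 from rfl, show ((5:Fin 6):ℕ)=5 from rfl]
  try ring

lemma J2 (X : V) : JJ X 2 =
    ((p11 * p32 * p63 - p32 * p33 * p63 + p33 ^ 2 * p43 + p43) / (p12 * p63)) * X 0
      + p32 * X 1 + p33 * X 2 - ((p33 ^ 2 + 1) / p63) * X 5 := by
  simp only [Jg2, e, Pi.add_apply, Pi.sub_apply, Pi.smul_apply, Pi.neg_apply,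
    smul_eq_mul, Pi.single_apply]
  norm_num [Fin.ext_iff, show ((0:Fin 6):ℕ)=0 from rfl, show ((1:Fin 6):ℕ)=1 from rfl,
    show ((2:Fin 6):ℕ)=2 from rfl, show ((3:Fin 6):ℕ)=3 from rfl,
    show ((4:Fin 6):ℕ)=4 from rfl, show ((5:Fin 6):ℕ)=5 from rfl]
  try ring

lemma J3 (X : V) : JJ X 3 =
    p41 * X 0 + p42 * X 1 + p43 * X 2 + p11 * X 3 + p12 * X 4 - p32 * X 5 := by
  simp only [Jg2, e, Pi.add_apply, Pi.sub_apply, Pi.smul_apply, Pi.neg_apply,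
    smul_eq_mul, Pi.single_apply]
  norm_num [Fin.ext_iff, show ((0:Fin 6):ℕ)=0 from rfl, show ((1:Fin 6):ℕ)=1 from rfl,
    show ((2:Fin 6):ℕ)=2 from rfl, show ((3:Fin 6):ℕ)=3 from rfl,
    show ((4:Fin 6):ℕ)=4 from rfl, show ((5:Fin 6):ℕ)=5 from rfl]
  try ring

lemma J4 (X : V) : JJ X 4 =
    ((p11 ^ 2 * p42 * p63 - 2 * p11 * p12 * p41 * p63 - p32 ^ 2 * p63 ^ 2 +
      2 * p32 * p33 * p43 * p63 - p33 ^ 2 * p43 ^ 2 + p42 * p63 - p43 ^ 2) /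
      (p12 ^ 2 * p63)) * X 0 - p41 * X 1
      - ((p11 * p43 - p32 * p63 + p33 * p43) / p12) * X 2
      - ((p11 ^ 2 + 1) / p12) * X 3 - p11 * X 4
      + ((p11 * p32 * p63 - p32 * p33 * p63 + p33 ^ 2 * p43 + p43) / (p12 * p63)) * X 5 := by
  simp only [Jg2, e, Pi.add_apply, Pi.sub_apply, Pi.smul_apply, Pi.neg_apply,
    smul_eq_mul, Pi.single_apply]
  norm_num [Fin.ext_iff, show ((0:Fin 6):ℕ)=0 from rfl, show ((1:Fin 6):ℕ)=1 from rfl,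
    show ((2:Fin 6):ℕ)=2 from rfl, show ((3:Fin 6):ℕ)=3 from rfl,
    show ((4:Fin 6):ℕ)=4 from rfl, show ((5:Fin 6):ℕ)=5 from rfl]
  try ring

lemma J5 (X : V) : JJ X 5 =
    ((p11 * p43 - p32 * p63 + p33 * p43) / p12) * X 0 + p43 * X 1 + p63 * X 2
      - p33 * X 5 := by
  simp only [Jg2, e, Pi.add_apply, Pi.sub_apply, Pi.smul_apply, Pi.neg_apply,
    smul_eq_mul, Pi.single_apply]
  norm_num [Fin.ext_iff, show ((0:Fin 6):ℕ)=0 from rfl, show ((1:Fin 6):ℕ)=1 from rfl,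
    show ((2:Fin 6):ℕ)=2 from rfl, show ((3:Fin 6):ℕ)=3 from rfl,
    show ((4:Fin 6):ℕ)=4 from rfl, show ((5:Fin 6):ℕ)=5 from rfl]
  try ring

lemma bra0 (X Y : V) : bra X Y 0 = 0 := by
  simp [bra, e, Pi.single_apply]
lemma bra1 (X Y : V) : bra X Y 1 = 0 := by
  simp [bra, e, Pi.single_apply]
lemma bra2 (X Y : V) : bra X Y 2 = X 0 * Y 1 - X 1 * Y 0 := by
  simp [bra, e, Pi.single_apply, Fin.ext_iff, show ((2:Fin 6):ℕ)=2 from rfl, show ((3:Fin 6):ℕ)=3 from rfl, show ((4:Fin 6):ℕ)=4 from rfl, show ((5:Fin 6):ℕ)=5 from rfl]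
lemma bra3 (X Y : V) : bra X Y 3 = X 0 * Y 2 - X 2 * Y 0 := by
  simp [bra, e, Pi.single_apply, Fin.ext_iff, show ((2:Fin 6):ℕ)=2 from rfl, show ((3:Fin 6):ℕ)=3 from rfl, show ((4:Fin 6):ℕ)=4 from rfl, show ((5:Fin 6):ℕ)=5 from rfl]
lemma bra4 (X Y : V) : bra X Y 4 = X 1 * Y 2 - X 2 * Y 1 := by
  simp [bra, e, Pi.single_apply, Fin.ext_iff, show ((2:Fin 6):ℕ)=2 from rfl, show ((3:Fin 6):ℕ)=3 from rfl, show ((4:Fin 6):ℕ)=4 from rfl, show ((5:Fin 6):ℕ)=5 from rfl]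
lemma bra5 (X Y : V) : bra X Y 5 = 0 := by
  simp [bra, e, Pi.single_apply, Fin.ext_iff, show ((2:Fin 6):ℕ)=2 from rfl, show ((3:Fin 6):ℕ)=3 from rfl, show ((4:Fin 6):ℕ)=4 from rfl, show ((5:Fin 6):ℕ)=5 from rfl]
end complemmas

lemma vec_ext (X Y : V) (h0 : X 0 = Y 0) (h1 : X 1 = Y 1) (h2 : X 2 = Y 2)
    (h3 : X 3 = Y 3) (h4 : X 4 = Y 4) (h5 : X 5 = Y 5) : X = Y := by
  funext i; fin_cases i <;> assumption


set_option maxHeartbeats 4000000 in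
/-- for `ψ₁₂ ≠ 0` and `ψ₆₃ ≠ 0`, the endomorphism `J` satisfies
`J² = −Id`, has vanishing Nijenhuis tensor, and is compatible with
`ω₀ = e¹∧e⁵ − e²∧e⁴ − e³∧e⁶`: `ω₀(JX,JY) = ω₀(X,Y)` for all `X, Y`. -/
theorem statement14 (p11 p12 p32 p33 p41 p42 p43 p63 : ℝ)
    (h12 : p12 ≠ 0) (h63 : p63 ≠ 0) :
    (∀ X : V, Jg2 p11 p12 p32 p33 p41 p42 p43 p63
        (Jg2 p11 p12 p32 p33 p41 p42 p43 p63 X) = -X) ∧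
    (∀ X Y : V, nijJ (Jg2 p11 p12 p32 p33 p41 p42 p43 p63) X Y = 0) ∧
    (∀ X Y : V, om0 (Jg2 p11 p12 p32 p33 p41 p42 p43 p63 X)
        (Jg2 p11 p12 p32 p33 p41 p42 p43 p63 Y) = om0 X Y) := by
  refine ⟨fun X => ?_, fun X Y => ?_, fun X Y => ?_⟩
  · apply vec_ext <;>
      simp only [J0, J1, J2, J3, J4, J5, Pi.neg_apply] <;> field_simp <;> ring
  · apply vec_ext <;>
      simp only [nijJ, Pi.sub_apply, Pi.zero_apply, J0, J1, J2, J3, J4, J5,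
        bra0, bra1, bra2, bra3, bra4, bra5] <;> field_simp <;> ring
  · rw [om0_eq, om0_eq]
    simp only [J0, J1, J2, J3, J4, J5]
    field_simp
    ring
end
end
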